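/- arXiv:2010.08274 — 3 statements merged into one kernel-verified Lean document; each statement's English description precedes it below -/
import Mathlib

section
/- Let V be a finite type with n = card V elements and let r : V → V → Prop be an irreflexive relation (a finite directed graph with no self-loops). Fix vertices v and u, and suppose u is reachable from v along r (i.e., Relation.ReflTransGen r v u holds). Let d be the cardinality of the out-neighborhood {w : V | r v w} of v. Then there exists a list l : List V such that List.Chain r v l holds, the last element of the list v :: l is u, and the length of l (the number of edges traversed) is at most n - d. -/
/-!
Take a shortest walk `v = p₀, p₁, …, p_k = u`. It visits no vertex twice, and none of
`p₂, …, p_k` is an out-neighbour of `v`, since otherwise the walk could jump there directly.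
As `r` is irreflexive, `v` is not an out-neighbour of itself either, so `v, p₂, …, p_k` are `k`
distinct vertices outside the out-neighbourhood of `v`, whence `k + d ≤ n`.
-/

theorem List.exists_eq_append_cons_append_cons_of_not_nodup {α : Type*} {l : List α}
    (h : ¬l.Nodup) : ∃ s a t q, l = s ++ a :: t ++ a :: q := by
  induction l with
  | nil => exact absurd List.nodup_nil h
  | cons b l ih =>
    by_cases hb : b ∈ l
    · obtain ⟨t, q, rfl⟩ := List.append_of_mem hb
      exact ⟨[], b, t, q, rfl⟩
    · obtain ⟨s, a, t, q, rfl⟩ := ih fun hl => h (List.nodup_cons.2 ⟨hb, hl⟩)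
      exact ⟨b :: s, a, t, q, rfl⟩

theorem List.Nodup.length_le_card_sub_card {α : Type*} [Fintype α] {l : List α} (hl : l.Nodup)
    {s : Set α} (hs : ∀ w ∈ l, w ∉ s) : l.length ≤ Fintype.card α - Nat.card s := by
  classical
  rw [← List.toFinset_card_of_nodup hl, Nat.card_coe_set_eq, ← Nat.card_eq_fintype_card,
    ← Set.ncard_compl, ← Set.ncard_coe_finset]
  exact Set.ncard_le_ncard fun w hw => hs w (by simpa using hw)

namespace Relation

variable {α : Type*} {r : α → α → Prop} {v u w : α}

/-- Walks are recorded by their full vertex sequence `p`, so a walk with `k` edges has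
`p.length = k + 1`. -/
def IsWalk (r : α → α → Prop) (v u : α) (p : List α) : Prop :=
  p.IsChain r ∧ p.head? = some v ∧ p.getLast? = some u

def IsShortestWalk (r : α → α → Prop) (v u : α) (p : List α) : Prop :=
  IsWalk r v u p ∧ ∀ q, IsWalk r v u q → p.length ≤ q.length

theorem IsWalk.bypass_loop {s t q : List α} {a : α} (h : IsWalk r v u (s ++ a :: t ++ a :: q)) :
    IsWalk r v u (s ++ a :: q) := by
  obtain ⟨hc, hv, hu⟩ := h
  rw [List.isChain_split, List.append_assoc, List.cons_append, List.isChain_split] at hc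
  refine ⟨List.isChain_split.2 ⟨hc.1.1, hc.2⟩, ?_, ?_⟩
  · simpa [List.head?_append] using hv
  · rwa [List.getLast?_append_cons] at hu ⊢

theorem IsWalk.bypass_of_rel {s q : List α} (h : IsWalk r v u (s ++ w :: q)) (hvw : r v w) :
    IsWalk r v u (v :: w :: q) := by
  obtain ⟨hc, -, hu⟩ := h
  exact ⟨.cons_cons hvw (List.isChain_split.1 hc).2, rfl, by simpa using hu⟩

theorem exists_isShortestWalk (h : ReflTransGen r v u) : ∃ p, IsShortestWalk r v u p := by
  obtain ⟨l, hc, hu⟩ := List.exists_isChain_cons_of_relationReflTransGen h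
  obtain ⟨p, hp, hmin⟩ := (measure List.length).wf.has_min {p | IsWalk r v u p}
    ⟨v :: l, hc, rfl, by rw [List.getLast?_eq_some_getLast (List.cons_ne_nil v l), hu]⟩
  exact ⟨p, hp, fun q hq => not_lt.1 (hmin q hq)⟩

theorem IsShortestWalk.nodup {p : List α} (h : IsShortestWalk r v u p) : p.Nodup := by
  by_contra hp
  obtain ⟨s, a, t, q, rfl⟩ := List.exists_eq_append_cons_append_cons_of_not_nodup hp
  have hlen := h.2 _ h.1.bypass_loop
  simp only [List.length_append, List.length_cons] at hlen
  omega

theorem IsShortestWalk.not_rel_of_mem {x : α} {l : List α} (h : IsShortestWalk r v u (v :: x :: l))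
    (hw : w ∈ l) : ¬r v w := by
  intro hvw
  obtain ⟨s, q, rfl⟩ := List.append_of_mem hw
  have hwalk : IsWalk r v u ((v :: x :: s) ++ w :: q) := h.1
  have hlen := h.2 _ (hwalk.bypass_of_rel hvw)
  simp only [List.length_append, List.length_cons] at hlen
  omega

end Relation

theorem reachable_walk_length_le_card_sub_outdegree
    {V : Type*} [Fintype V] (r : V → V → Prop) (hirr : Irreflexive r)
    (n : ℕ) (hn : n = Fintype.card V)
    (v u : V) (hreach : Relation.ReflTransGen r v u)
    (d : ℕ) (hd : d = Nat.card {w : V | r v w}) :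
    ∃ l : List V, List.Chain r v l ∧
      (v :: l).getLast (List.cons_ne_nil v l) = u ∧ l.length ≤ n - d := by
  obtain ⟨p, hp⟩ := Relation.exists_isShortestWalk hreach
  obtain ⟨hchain, hhead, hlast⟩ := hp.1
  obtain ⟨l, rfl⟩ := List.head?_eq_some_iff.1 hhead
  refine ⟨l, hchain, ?_, ?_⟩
  · simpa [List.getLast?_eq_some_getLast (List.cons_ne_nil v l)] using hlast
  subst hn hd
  rcases l with _ | ⟨x, l⟩
  · exact Nat.zero_le _
  · have hnodup : (v :: l).Nodup := hp.nodup.sublist ((List.sublist_cons_self x l).cons_cons v)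
    refine hnodup.length_le_card_sub_card ?_
    rintro w (_ | ⟨_, hw⟩) hvw
    · exact hirr v hvw
    · exact hp.not_rel_of_mem hw hvw
end

section
/- Let G be a connected simple graph on a finite vertex type V with n = card V vertices. Then for every pair of vertices v and u, the graph distance satisfies G.dist v u ≤ n - G.degree v. -/
/-!
Let `p` be a shortest walk from `v` to `u`. A neighbour `w` of `v` on `p` must be the second vertex
of `p`: otherwise the edge `vw` followed by the rest of `p` after `w` would be shorter. So the
`dist v u + 1` vertices of `p` and the `degree v` neighbours of `v` share at most one vertex.
-/

namespace SimpleGraph.Walk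

variable {V : Type*} {G : SimpleGraph V} {u v w : V}

lemma length_takeUntil_le_one_of_adj [DecidableEq V] (p : G.Walk v u)
    (hp : p.length = G.dist v u) (hw : w ∈ p.support) (hadj : G.Adj v w) :
    (p.takeUntil w hw).length ≤ 1 := by
  have hsplit : (p.takeUntil w hw).length + (p.dropUntil w hw).length = p.length := by
    rw [← length_append, take_spec]
  have hshortcut : G.dist v u ≤ (cons hadj (p.dropUntil w hw)).length := dist_le _
  rw [length_cons] at hshortcut
  omega

lemma eq_getVert_one_of_adj (p : G.Walk v u) (hp : p.length = G.dist v u)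
    (hw : w ∈ p.support) (hadj : G.Adj v w) : w = p.getVert 1 := by
  classical
  have hle := p.length_takeUntil_le_one_of_adj hp hw hadj
  have hne : (p.takeUntil w hw).length ≠ 0 := fun h0 =>
    hadj.ne (by simpa [h0] using p.getVert_length_takeUntil hw)
  obtain hone : (p.takeUntil w hw).length = 1 := by omega
  simpa [hone] using (p.getVert_length_takeUntil hw).symm

lemma length_add_degree_le_card [Fintype V] [DecidableRel G.Adj] (p : G.Walk v u)
    (hp : p.length = G.dist v u) : p.length + G.degree v ≤ Fintype.card V := by
  classical
  set S := p.support.toFinset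
  set N := G.neighborFinset v
  have hS : S.card = p.length + 1 := by
    rw [List.toFinset_card_of_nodup (p.isPath_of_length_eq_dist hp).support_nodup,
      length_support]
  have hinter : S ∩ N ⊆ {p.getVert 1} := fun w hw => by
    obtain ⟨hwS, hwN⟩ := Finset.mem_inter.mp hw
    exact Finset.mem_singleton.mpr
      (p.eq_getVert_one_of_adj hp (List.mem_toFinset.mp hwS) ((G.mem_neighborFinset v w).mp hwN))
  have hinter_card : (S ∩ N).card ≤ 1 := by simpa using Finset.card_le_card hinter
  have hunion := Finset.card_union_add_card_inter S N
  rw [hS, G.card_neighborFinset_eq_degree] at hunion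
  have := Finset.card_le_univ (S ∪ N)
  omega

end SimpleGraph.Walk

theorem dist_le_card_sub_degree_general
    {V : Type*} [Fintype V] (G : SimpleGraph V) [DecidableRel G.Adj]
    (n : ℕ) (hn : n = Fintype.card V) (v u : V) :
    G.dist v u ≤ n - G.degree v := by
  by_cases hreach : G.Reachable v u
  · obtain ⟨p, hp⟩ := hreach.exists_walk_length_eq_dist
    have := p.length_add_degree_le_card hp
    omega
  · simp [SimpleGraph.dist_eq_zero_of_not_reachable hreach]

theorem dist_le_card_sub_degree
    {V : Type*} [Fintype V] (G : SimpleGraph V) [DecidableRel G.Adj]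
    (hG : G.Connected) (n : ℕ) (hn : n = Fintype.card V) (v u : V) :
    G.dist v u ≤ n - G.degree v :=
  dist_le_card_sub_degree_general G n hn v u
end

section
/- Let G be a connected simple graph on a finite nonempty vertex type V with n = card V vertices. Then for every pair of vertices v and u, the graph distance satisfies G.dist v u ≤ n - G.minDegree, where G.minDegree is the minimum degree over all vertices of G. -/
/-!
A shortest path from `v` to `u` has `dist v u + 1` vertices. Along it the distance from `v` grows
by one per step, so the only neighbour of `v` on it is its second vertex; the remaining
`degree v - 1` neighbours of `v` lie off the path, whence `dist v u + degree v ≤ n`.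
-/

open Finset

namespace SimpleGraph

variable {V : Type*} {G : SimpleGraph V} {v u x : V}

namespace Walk

variable [DecidableEq V]

lemma length_takeUntil_eq_dist {p : G.Walk v u} (hp : p.length = G.dist v u)
    (hx : x ∈ p.support) : (p.takeUntil x hx).length = G.dist v x := by
  have hsplit : (p.takeUntil x hx).length + (p.dropUntil x hx).length = p.length := by
    rw [← length_append, p.take_spec hx]
  have htriangle := (p.takeUntil x hx).reachable.dist_triangle_left u
  have htake := dist_le (p.takeUntil x hx)
  have hdrop := dist_le (p.dropUntil x hx)
  omega

lemma eq_snd_of_adj_of_length_eq_dist {p : G.Walk v u} (hp : p.length = G.dist v u)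
    (hx : x ∈ p.support) (hadj : G.Adj v x) : x = p.snd := by
  have hone : (p.takeUntil x hx).length = 1 := by
    rw [length_takeUntil_eq_dist hp hx, dist_eq_one_iff_adj.mpr hadj]
  simpa [hone] using (p.getVert_length_takeUntil hx).symm

end Walk

lemma Reachable.dist_add_degree_le_card [Fintype V] [DecidableRel G.Adj]
    (h : G.Reachable v u) : G.dist v u + G.degree v ≤ Fintype.card V := by
  classical
  obtain ⟨p, hpath, hp⟩ := h.exists_path_of_dist
  set S := p.support.toFinset
  set N := G.neighborFinset v
  have hS : #S = G.dist v u + 1 := by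
    rw [List.toFinset_card_of_nodup hpath.support_nodup, Walk.length_support, hp]
  have hNS : #(S ∩ N) ≤ 1 := by
    refine card_le_one.mpr fun x hx y hy ↦ ?_
    simp only [S, N, mem_inter, List.mem_toFinset, mem_neighborFinset] at hx hy
    rw [Walk.eq_snd_of_adj_of_length_eq_dist hp hx.1 hx.2,
      Walk.eq_snd_of_adj_of_length_eq_dist hp hy.1 hy.2]
  have hunion := card_union_add_card_inter S N
  have huniv := card_le_univ (S ∪ N)
  have hN : #N = G.degree v := card_neighborFinset_eq_degree G v
  omega

end SimpleGraph

theorem dist_le_card_sub_minDegree_general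
    {V : Type*} [Fintype V] (G : SimpleGraph V) [DecidableRel G.Adj]
    (hG : G.Connected) (n : ℕ) (hn : n = Fintype.card V) (v u : V) :
    G.dist v u ≤ n - G.minDegree := by
  have hcount := (hG v u).dist_add_degree_le_card
  have hmin := G.minDegree_le_degree v
  omega

theorem dist_le_card_sub_minDegree
    {V : Type*} [Fintype V] [Nonempty V] (G : SimpleGraph V) [DecidableRel G.Adj]
    (hG : G.Connected) (n : ℕ) (hn : n = Fintype.card V) (v u : V) :
    G.dist v u ≤ n - G.minDegree :=
  dist_le_card_sub_minDegree_general G hG n hn v u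
end
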